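/- Fix H ∈ {1,−1}, let τ(X) = P_H X̄ P_H on 𝔰𝔩(3,ℂ), and let 𝔤_j (j ∈ ℤ/6ℤ) denote the ε^j-eigenspace of σ_H(X) = −P_H^ε Xᵀ P_H^ε in 𝔰𝔩(3,ℂ). Then τ(𝔤_j) = 𝔤_{−j} for all j, where indices are taken modulo 6. -/
import Mathlib

open Matrix Complex

noncomputable section

/-- `ε = e^{iπ/3}`. -/
def eps : ℂ := Complex.exp (Real.pi * Complex.I / 3)

/-- The matrix `P_H` with rows `(0,1,0)`, `(1,0,0)`, `(0,0,−H)`. -/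
def PH (H : ℝ) : Matrix (Fin 3) (Fin 3) ℂ :=
  !![0, 1, 0; 1, 0, 0; 0, 0, -(H : ℂ)]

/-- The matrix `P_H^ε` with rows `(0, ε², 0)`, `(ε⁴, 0, 0)`, `(0, 0, −H)`. -/
def PHeps (H : ℝ) : Matrix (Fin 3) (Fin 3) ℂ :=
  !![0, eps ^ 2, 0; eps ^ 4, 0, 0; 0, 0, -(H : ℂ)]

/-- `σ_H(X) = −P_H^ε Xᵀ P_H^ε`. -/
def sigmaH (H : ℝ) (X : Matrix (Fin 3) (Fin 3) ℂ) : Matrix (Fin 3) (Fin 3) ℂ :=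
  -(PHeps H * Xᵀ * PHeps H)

/-- `τ(X) = P_H X̄ P_H`. -/
def tauH (H : ℝ) (X : Matrix (Fin 3) (Fin 3) ℂ) : Matrix (Fin 3) (Fin 3) ℂ :=
  PH H * X.map (starRingEnd ℂ) * PH H

/-- The `ε^j`-eigenspace `𝔤_j` of `σ_H` in `𝔰𝔩(3,ℂ)`, with `j ∈ ℤ/6ℤ`. -/
def gsp (H : ℝ) (j : ZMod 6) : Set (Matrix (Fin 3) (Fin 3) ℂ) :=
  {X | X.trace = 0 ∧ sigmaH H X = eps ^ (j.val) • X}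

/- ## Auxiliary lemmas -/

lemma eps6 : eps ^ 6 = 1 := by
  rw [eps, ← Complex.exp_nat_mul]
  rw [show (6 : ℕ) * (Real.pi * Complex.I / 3) = 2 * Real.pi * Complex.I by push_cast; ring]
  exact Complex.exp_two_pi_mul_I

lemma conj_eps_mul : (starRingEnd ℂ) eps * eps = 1 := by
  rw [eps, ← Complex.exp_conj, ← Complex.exp_add]
  rw [show (starRingEnd ℂ) (Real.pi * Complex.I / 3) + Real.pi * Complex.I / 3 = 0 by
    rw [map_div₀, _root_.map_mul, Complex.conj_I, Complex.conj_ofReal, map_ofNat]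
    ring]
  exact Complex.exp_zero

lemma conj_eps : (starRingEnd ℂ) eps = eps ^ 5 := by
  have h2 : eps * eps ^ 5 = 1 := by linear_combination eps6
  exact (eq_inv_of_mul_eq_one_left conj_eps_mul).trans (inv_eq_of_mul_eq_one_right h2)

lemma eps_pow_mod (a b k : ℕ) (h : a = b + 6 * k) : eps ^ a = eps ^ b := by
  rw [h, pow_add, pow_mul, eps6, one_pow, mul_one]

lemma conj_eps2 : (starRingEnd ℂ) (eps ^ 2) = eps ^ 4 := by
  rw [map_pow, conj_eps, ← pow_mul]
  exact eps_pow_mod 10 4 1 rfl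

lemma conj_eps4 : (starRingEnd ℂ) (eps ^ 4) = eps ^ 2 := by
  rw [map_pow, conj_eps, ← pow_mul]
  exact eps_pow_mod 20 2 3 rfl

lemma conj_eps_val (j : ZMod 6) :
    (starRingEnd ℂ) (eps ^ j.val) = eps ^ (-j).val := by
  rw [map_pow, conj_eps, ← pow_mul]
  fin_cases j
  · exact eps_pow_mod 0 0 0 rfl
  · exact eps_pow_mod 5 5 0 rfl
  · exact eps_pow_mod 10 4 1 rfl
  · exact eps_pow_mod 15 3 2 rfl
  · exact eps_pow_mod 20 2 3 rfl
  · exact eps_pow_mod 25 1 4 rfl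

lemma PH_symm (H : ℝ) : (PH H)ᵀ = PH H := by
  ext i j
  fin_cases i <;> fin_cases j <;> simp [PH, Matrix.vecHead, Matrix.vecTail]

lemma PH_sq (H : ℝ) (hH2 : (H : ℂ) ^ 2 = 1) : PH H * PH H = 1 := by
  ext i j
  fin_cases i <;> fin_cases j <;>
    simp [PH, Matrix.mul_apply, Fin.sum_univ_three, Matrix.one_apply, Matrix.vecHead, Matrix.vecTail] <;>
    linear_combination hH2

lemma conj_PH (H : ℝ) : (PH H).map (starRingEnd ℂ) = PH H := by
  ext i j
  fin_cases i <;> fin_cases j <;> simp [PH, Complex.conj_ofReal, Matrix.vecHead, Matrix.vecTail]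

/-- `E·Q = Q·Ē` (both equal `diag(ε²,ε⁴,1)` when `H² = 1`). -/
lemma EQ_eq (H : ℝ) (hH2 : (H : ℂ) ^ 2 = 1) :
    PHeps H * PH H = PH H * (PHeps H).map (starRingEnd ℂ) := by
  ext i j
  fin_cases i <;> fin_cases j <;>
    simp [PH, PHeps, Matrix.mul_apply, Fin.sum_univ_three, Matrix.map_apply,
      conj_eps2, conj_eps4, Complex.conj_ofReal, Matrix.vecHead, Matrix.vecTail] <;>
    linear_combination hH2

/-- `Q·E = Ē·Q`. -/
lemma QE_eq (H : ℝ) (hH2 : (H : ℂ) ^ 2 = 1) :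
    PH H * PHeps H = (PHeps H).map (starRingEnd ℂ) * PH H := by
  ext i j
  fin_cases i <;> fin_cases j <;>
    simp [PH, PHeps, Matrix.mul_apply, Fin.sum_univ_three, Matrix.map_apply,
      conj_eps2, conj_eps4, Complex.conj_ofReal, Matrix.vecHead, Matrix.vecTail] <;>
    linear_combination hH2

lemma map_conj_mul (A B : Matrix (Fin 3) (Fin 3) ℂ) :
    (A * B).map (starRingEnd ℂ) = A.map (starRingEnd ℂ) * B.map (starRingEnd ℂ) := by
  ext i j
  simp [Matrix.mul_apply, Matrix.map_apply, map_sum]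

lemma comm_key (H : ℝ) (hH2 : (H : ℂ) ^ 2 = 1) (X : Matrix (Fin 3) (Fin 3) ℂ) :
    sigmaH H (tauH H X) = tauH H (sigmaH H X) := by
  unfold sigmaH tauH
  have hneg : (-(PHeps H * Xᵀ * PHeps H)).map (starRingEnd ℂ)
      = -((PHeps H * Xᵀ * PHeps H).map (starRingEnd ℂ)) := by
    ext i j; simp only [Matrix.map_apply, Matrix.neg_apply, map_neg]
  rw [hneg, Matrix.mul_neg, Matrix.neg_mul, neg_inj]
  rw [map_conj_mul, map_conj_mul]
  rw [Matrix.transpose_mul, Matrix.transpose_mul, PH_symm, Matrix.transpose_map]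
  calc PHeps H * (PH H * ((X.map (starRingEnd ℂ))ᵀ * PH H)) * PHeps H
      = (PHeps H * PH H) * (X.map (starRingEnd ℂ))ᵀ * (PH H * PHeps H) := by
        simp only [Matrix.mul_assoc]
    _ = (PH H * (PHeps H).map (starRingEnd ℂ)) * (X.map (starRingEnd ℂ))ᵀ *
          ((PHeps H).map (starRingEnd ℂ) * PH H) := by rw [EQ_eq H hH2, QE_eq H hH2]
    _ = PH H * ((PHeps H).map (starRingEnd ℂ) * (X.map (starRingEnd ℂ))ᵀ *
          (PHeps H).map (starRingEnd ℂ)) * PH H := by simp only [Matrix.mul_assoc]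

lemma tau_invol (H : ℝ) (hH2 : (H : ℂ) ^ 2 = 1) (X : Matrix (Fin 3) (Fin 3) ℂ) :
    tauH H (tauH H X) = X := by
  unfold tauH
  rw [map_conj_mul, map_conj_mul, conj_PH]
  have hmap : (X.map (starRingEnd ℂ)).map (starRingEnd ℂ) = X := by
    ext i j; simp [Matrix.map_apply]
  rw [hmap]
  calc PH H * (PH H * X * PH H) * PH H
      = (PH H * PH H) * X * (PH H * PH H) := by simp only [Matrix.mul_assoc]
    _ = X := by rw [PH_sq H hH2]; simp

lemma tau_smul (H : ℝ) (c : ℂ) (X : Matrix (Fin 3) (Fin 3) ℂ) :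
    tauH H (c • X) = (starRingEnd ℂ) c • tauH H X := by
  unfold tauH
  have : (c • X).map (starRingEnd ℂ) = (starRingEnd ℂ) c • X.map (starRingEnd ℂ) := by
    ext i j; simp [Matrix.map_apply]
  rw [this, Matrix.mul_smul, Matrix.smul_mul]

lemma tau_trace (H : ℝ) (hH2 : (H : ℂ) ^ 2 = 1) (X : Matrix (Fin 3) (Fin 3) ℂ)
    (h : X.trace = 0) : (tauH H X).trace = 0 := by
  unfold tauH
  rw [Matrix.trace_mul_cycle, PH_sq H hH2, Matrix.one_mul]
  have : (X.map (starRingEnd ℂ)).trace = (starRingEnd ℂ) X.trace := by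
    simp [Matrix.trace, Matrix.diag, Matrix.map_apply, map_sum]
  rw [this, h, map_zero]

lemma tau_mem (H : ℝ) (hH2 : (H : ℂ) ^ 2 = 1) (j : ZMod 6)
    (X : Matrix (Fin 3) (Fin 3) ℂ) (hX : X ∈ gsp H j) : tauH H X ∈ gsp H (-j) := by
  obtain ⟨ht, hs⟩ := hX
  refine ⟨tau_trace H hH2 X ht, ?_⟩
  rw [comm_key H hH2, hs, tau_smul, conj_eps_val]

/-- For `H ∈ {1, −1}`, the anti-linear involution `τ` maps the
`ε^j`-eigenspace of `σ_H` onto the `ε^{−j}`-eigenspace: `τ(𝔤_j) = 𝔤_{−j}` for all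
`j ∈ ℤ/6ℤ`. -/
theorem stmt_16 (H : ℝ) (hH : H = 1 ∨ H = -1) :
    ∀ j : ZMod 6, tauH H '' gsp H j = gsp H (-j) := by
  have hH2 : (H : ℂ) ^ 2 = 1 := by rcases hH with h | h <;> rw [h] <;> norm_num
  intro j
  apply Set.Subset.antisymm
  · rintro _ ⟨X, hX, rfl⟩
    exact tau_mem H hH2 j X hX
  · intro X hX
    refine ⟨tauH H X, ?_, tau_invol H hH2 X⟩
    have := tau_mem H hH2 (-j) X hX
    rwa [neg_neg] at this

end
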